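/- Let L : T₀ × ℝⁿ × ℝ^{np} → ℝ be measurable in t and C¹ in (x,y) for each t, and suppose there exist a ∈ C¹(ℝ₊,ℝ₊) with derivative bounded above and b ∈ C(T₀,ℝ₊) such that |L(t,x,y)| ≤ a(|x|+|y|²)b(t), |∇ₓL(t,x,y)| ≤ a(|x|)b(t), |∇_yL(t,x,y)| ≤ a(|y|)b(t). Then the action φ(u) = ∫_{T₀} L(t,u(t),∂u/∂t(t)) dt is Gâteaux differentiable on W^{1,2}_T, with ⟨φ′(u),v⟩ = ∫_{T₀} [⟨∇ₓL(t,u,∂u/∂t), v⟩ + ⟨∇_yL(t,u,∂u/∂t), ∂v/∂t⟩] dt for all v ∈ W^{1,2}_T. -/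

import Mathlib

open MeasureTheory Real Filter Topology
open scoped RealInnerProductSpace BigOperators ENNReal NNReal

noncomputable section

abbrev Ep (p : ℕ) := EuclideanSpace ℝ (Fin p)
abbrev En (n : ℕ) := EuclideanSpace ℝ (Fin n)
/-- The space `ℝ^{np}` of spatial Jacobian values, with the Frobenius (Euclidean) norm. -/
abbrev Dpn (p n : ℕ) := PiLp 2 (fun _ : Fin p => En n)

/-- The parallelepiped `T₀ = [0,T¹] × ⋯ × [0,Tᵖ]`. -/
def Tdom {p : ℕ} (T : Fin p → ℝ) : Set (Ep p) :=
  WithLp.ofLp ⁻¹' (Set.univ.pi fun i => Set.Icc 0 (T i))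

/-- Smooth multiply `T`-periodic test functions `ℝᵖ → ℝⁿ` (the class `C^∞_T`). -/
def IsTest {p n : ℕ} (T : Fin p → ℝ) (v : Ep p → En n) : Prop :=
  ContDiff ℝ (⊤ : ℕ∞) v ∧ ∀ (t : Ep p) (i : Fin p), v (t + T i • EuclideanSpace.single i 1) = v t

/-- `du` is the weak (partial) derivative (Jacobian matrix) of `u`, in the `T`-periodic sense. -/
def IsWeakDeriv {p n : ℕ} (T : Fin p → ℝ) (u : Ep p → En n) (du : Ep p → Dpn p n) : Prop :=
  ∀ v : Ep p → En n, IsTest T v → ∀ α : Fin p,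
    (∫ t in Tdom T, ⟪u t, fderiv ℝ v t (EuclideanSpace.single α 1)⟫) =
      - ∫ t in Tdom T, ⟪du t α, v t⟫

/-- Membership of the pair `(u, du)` in the periodic Sobolev space `H¹_T = W^{1,2}_T`. -/
def MemH1 {p n : ℕ} (T : Fin p → ℝ) (u : Ep p → En n) (du : Ep p → Dpn p n) : Prop :=
  MemLp u 2 (volume.restrict (Tdom T)) ∧ MemLp du 2 (volume.restrict (Tdom T)) ∧
    IsWeakDeriv T u du

/- ## Auxiliary lemmas -/

theorem int_mul_of_L2' {α : Type*} {m : MeasurableSpace α} {μ : Measure α} {f g : α → ℝ}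
    (hf : MemLp f 2 μ) (hg : MemLp g 2 μ) : Integrable (fun t => f t * g t) μ := by
  refine Integrable.mono' ((hf.integrable_sq.add hg.integrable_sq).const_mul (1/2 : ℝ))
    (hf.1.mul hg.1) (Filter.Eventually.of_forall fun t => ?_)
  simp only [Pi.add_apply]
  rw [Real.norm_eq_abs, abs_mul]
  nlinarith [abs_nonneg (f t), abs_nonneg (g t), sq_abs (f t), sq_abs (g t),
    sq_nonneg (|f t| - |g t|)]

theorem inner_gradient_apply' {E : Type*} [NormedAddCommGroup E] [InnerProductSpace ℝ E]
    [CompleteSpace E] (f : E → ℝ) (x w : E) :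
    ⟪gradient f x, w⟫ = fderiv ℝ f x w := by
  rw [gradient, InnerProductSpace.toDual_symm_apply]

theorem fderiv_prod_inner' {E F : Type*} [NormedAddCommGroup E] [InnerProductSpace ℝ E]
    [CompleteSpace E] [NormedAddCommGroup F] [InnerProductSpace ℝ F] [CompleteSpace F]
    (f : E × F → ℝ) (hf : Differentiable ℝ f) (x : E) (y : F) (w : E) (z : F) :
    fderiv ℝ f (x, y) (w, z) =
      ⟪gradient (fun x' => f (x', y)) x, w⟫ + ⟪gradient (fun y' => f (x, y')) y, z⟫ := by
  have h1 : HasFDerivAt (fun x' => f (x', y))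
      ((fderiv ℝ f (x, y)).comp (ContinuousLinearMap.inl ℝ E F)) x :=
    (hf (x, y)).hasFDerivAt.comp x (hasFDerivAt_prodMk_left x y)
  have h2 : HasFDerivAt (fun y' => f (x, y'))
      ((fderiv ℝ f (x, y)).comp (ContinuousLinearMap.inr ℝ E F)) y :=
    (hf (x, y)).hasFDerivAt.comp y (hasFDerivAt_prodMk_right x y)
  rw [inner_gradient_apply', inner_gradient_apply', h1.fderiv, h2.fderiv]
  simp only [ContinuousLinearMap.coe_comp', Function.comp_apply,
    ContinuousLinearMap.inl_apply, ContinuousLinearMap.inr_apply]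
  rw [← map_add]
  congr 1
  simp [Prod.mk_add_mk]

theorem keyDeriv' {E F : Type*} [NormedAddCommGroup E] [InnerProductSpace ℝ E]
    [CompleteSpace E] [NormedAddCommGroup F] [InnerProductSpace ℝ F] [CompleteSpace F]
    (f : E × F → ℝ) (hf : Differentiable ℝ f) (x v : E) (y dv : F) (lam : ℝ) :
    HasDerivAt (fun l : ℝ => f (x + l • v, y + l • dv))
      (⟪gradient (fun x' => f (x', y + lam • dv)) (x + lam • v), v⟫ +
        ⟪gradient (fun y' => f (x + lam • v, y')) (y + lam • dv), dv⟫) lam := by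
  have hγ : HasDerivAt (fun l : ℝ => ((x + l • v, y + l • dv) : E × F)) (v, dv) lam := by
    have h1 : HasDerivAt (fun l : ℝ => x + l • v) v lam := by
      simpa using ((hasDerivAt_id lam).smul_const v).const_add x
    have h2 : HasDerivAt (fun l : ℝ => y + l • dv) dv lam := by
      simpa using ((hasDerivAt_id lam).smul_const dv).const_add y
    exact h1.prodMk h2
  have hc := (hf (x + lam • v, y + lam • dv)).hasFDerivAt.comp_hasDerivAt lam hγ
  rwa [fderiv_prod_inner' f hf] at hc

theorem a_growth' (a : ℝ → ℝ) (ha : ContDiffOn ℝ 1 a (Set.Ici 0)) (M : ℝ)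
    (ha' : ∀ c ∈ Set.Ici (0:ℝ), derivWithin a (Set.Ici 0) c ≤ M) :
    ∀ r : ℝ, 0 ≤ r → a r ≤ a 0 + |M| * r := by
  intro r hr
  have hdiff : DifferentiableOn ℝ a (Set.Ici 0) := ha.differentiableOn one_ne_zero
  have hcont : ContinuousOn a (Set.Ici 0) := hdiff.continuousOn
  have hle : ∀ x ∈ interior (Set.Ici (0:ℝ)), deriv a x ≤ |M| := by
    intro x hx
    have hmem : Set.Ici (0:ℝ) ∈ 𝓝 x := by
      rw [interior_Ici] at hx
      exact Ici_mem_nhds hx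
    calc deriv a x = derivWithin a (Set.Ici 0) x := (derivWithin_of_mem_nhds hmem).symm
      _ ≤ M := ha' x (interior_subset hx)
      _ ≤ |M| := le_abs_self M
  have := (convex_Ici (0:ℝ)).image_sub_le_mul_sub_of_deriv_le hcont
    (hdiff.mono interior_subset) hle 0 Set.self_mem_Ici r hr hr
  linarith

theorem aesm_comp' {p n : ℕ} (L : Ep p → En n → Dpn p n → ℝ)
    (hLmeas : ∀ x y, Measurable fun t => L t x y)
    (hLcont : ∀ t, Continuous fun q : En n × Dpn p n => L t q.1 q.2)
    {μ : Measure (Ep p)} {w₁ : Ep p → En n} {w₂ : Ep p → Dpn p n}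
    (h₁ : AEStronglyMeasurable w₁ μ) (h₂ : AEStronglyMeasurable w₂ μ) :
    AEStronglyMeasurable (fun t => L t (w₁ t) (w₂ t)) μ := by
  borelize (Dpn p n)
  have hJ : Measurable (Function.uncurry fun (q : En n × Dpn p n) (t : Ep p) => L t q.1 q.2) :=
    measurable_uncurry_of_continuous_of_measurable (fun t => hLcont t) (fun q => hLmeas q.1 q.2)
  set m₁ := h₁.mk w₁
  set m₂ := h₂.mk w₂
  have hm₁ : Measurable m₁ := h₁.stronglyMeasurable_mk.measurable
  have hm₂ : Measurable m₂ := h₂.stronglyMeasurable_mk.measurable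
  have hcomp : Measurable fun t => L t (m₁ t) (m₂ t) :=
    hJ.comp ((hm₁.prodMk hm₂).prodMk measurable_id)
  refine (hcomp.aestronglyMeasurable).congr ?_
  filter_upwards [h₁.ae_eq_mk, h₂.ae_eq_mk] with t e₁ e₂
  simp only [m₁, m₂, ← e₁, ← e₂]

theorem tendsto_slope_of_hasDerivAt' {f : ℝ → ℝ} {d : ℝ} (h : HasDerivAt f d 0) :
    Tendsto (fun lam => (f lam - f 0) / lam) (𝓝[≠] (0:ℝ)) (𝓝 d) := by
  have h2 := hasDerivAt_iff_tendsto_slope.mp h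
  refine Tendsto.congr (fun lam => ?_) h2
  rw [slope_def_field]
  simp [div_eq_inv_mul]

theorem stmt6 {p n : ℕ} (T : Fin p → ℝ) (hT : ∀ i, 0 < T i)
    (L : Ep p → En n → Dpn p n → ℝ)
    (hLmeas : ∀ (x : En n) (y : Dpn p n), Measurable fun t => L t x y)
    (hLC1 : ∀ t : Ep p, ContDiff ℝ 1 (fun q : En n × Dpn p n => L t q.1 q.2))
    (a : ℝ → ℝ) (ha : ContDiffOn ℝ 1 a (Set.Ici 0)) (hapos : ∀ r ∈ Set.Ici (0:ℝ), 0 ≤ a r)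
    (M : ℝ) (ha' : ∀ c ∈ Set.Ici (0:ℝ), derivWithin a (Set.Ici 0) c ≤ M)
    (b : Ep p → ℝ) (hb : Continuous b) (hbpos : ∀ t ∈ Tdom T, 0 ≤ b t)
    (hL : ∀ t ∈ Tdom T, ∀ (x : En n) (y : Dpn p n), |L t x y| ≤ a (‖x‖ + ‖y‖ ^ 2) * b t)
    (hLx : ∀ t ∈ Tdom T, ∀ (x : En n) (y : Dpn p n),
      ‖gradient (fun x' => L t x' y) x‖ ≤ a ‖x‖ * b t)
    (hLy : ∀ t ∈ Tdom T, ∀ (x : En n) (y : Dpn p n),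
      ‖gradient (fun y' => L t x y') y‖ ≤ a ‖y‖ * b t)
    (u : Ep p → En n) (du : Ep p → Dpn p n) (hu : MemH1 T u du) :
    ∀ (v : Ep p → En n) (dv : Ep p → Dpn p n), MemH1 T v dv →
      Tendsto
        (fun lam : ℝ =>
          ((∫ t in Tdom T, L t (u t + lam • v t) (du t + lam • dv t)) -
              ∫ t in Tdom T, L t (u t) (du t)) / lam)
        (𝓝[≠] (0:ℝ))
        (nhds (∫ t in Tdom T,
          (⟪gradient (fun x' => L t x' (du t)) (u t), v t⟫ +
            ⟪gradient (fun y' => L t (u t) y') (du t), dv t⟫))) := by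
  intro v dv hv
  obtain ⟨huL2, hduL2, -⟩ := hu
  obtain ⟨hvL2, hdvL2, -⟩ := hv
  set μ := volume.restrict (Tdom T) with hμdef
  have hKc : IsCompact (Tdom T) :=
    (PiLp.homeomorph 2 (fun _ : Fin p => ℝ)).isCompact_preimage.2 (isCompact_univ_pi fun i => isCompact_Icc)
  have hKmeas : MeasurableSet (Tdom T) := hKc.isClosed.measurableSet
  haveI : IsFiniteMeasure μ := ⟨by
    rw [hμdef, Measure.restrict_apply_univ]; exact hKc.measure_lt_top⟩
  have h0mem : (0 : Ep p) ∈ Tdom T := by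
    rw [Tdom, Set.mem_preimage, WithLp.ofLp_zero]
    intro i _
    exact ⟨le_rfl, (hT i).le⟩
  obtain ⟨B, hB⟩ := hKc.exists_bound_of_continuousOn hb.continuousOn
  have hB0 : 0 ≤ B := le_trans (norm_nonneg _) (hB 0 h0mem)
  have h12 : (1 : ℝ≥0∞) ≤ 2 := by norm_num
  have hLd : ∀ t, Differentiable ℝ (fun q : En n × Dpn p n => L t q.1 q.2) :=
    fun t => (hLC1 t).differentiable one_ne_zero
  -- pointwise derivative
  have hdiffAll : ∀ (t : Ep p) (lam : ℝ),
      HasDerivAt (fun l : ℝ => L t (u t + l • v t) (du t + l • dv t))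
        (⟪gradient (fun x' => L t x' (du t + lam • dv t)) (u t + lam • v t), v t⟫ +
          ⟪gradient (fun y' => L t (u t + lam • v t) y') (du t + lam • dv t), dv t⟫) lam :=
    fun t lam =>
      keyDeriv' (fun q : En n × Dpn p n => L t q.1 q.2) (hLd t) (u t) (v t) (du t) (dv t) lam
  -- measurability of F lam
  have hmeasF : ∀ lam : ℝ,
      AEStronglyMeasurable (fun t => L t (u t + lam • v t) (du t + lam • dv t)) μ := by
    intro lam
    exact aesm_comp' L hLmeas (fun t => (hLC1 t).continuous)
      (huL2.1.add (hvL2.1.const_smul lam)) (hduL2.1.add (hdvL2.1.const_smul lam))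
  -- measurability of F' 0 via limits
  have hseq : Tendsto (fun k : ℕ => (1:ℝ)/(k+1)) atTop (𝓝[≠] (0:ℝ)) := by
    refine tendsto_nhdsWithin_of_tendsto_nhds_of_eventually_within _
      tendsto_one_div_add_atTop_nhds_zero_nat (Eventually.of_forall fun k => ?_)
    simp only [Set.mem_compl_iff, Set.mem_singleton_iff]
    positivity
  have hF'0meas : AEStronglyMeasurable (fun t =>
      (⟪gradient (fun x' => L t x' (du t + (0:ℝ) • dv t)) (u t + (0:ℝ) • v t), v t⟫ +
        ⟪gradient (fun y' => L t (u t + (0:ℝ) • v t) y') (du t + (0:ℝ) • dv t), dv t⟫)) μ := by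
    refine aestronglyMeasurable_of_tendsto_ae atTop
      (f := fun (k : ℕ) (t : Ep p) =>
        ((L t (u t + (((k:ℝ)+1)⁻¹) • v t) (du t + (((k:ℝ)+1)⁻¹) • dv t)) -
          L t (u t + (0:ℝ) • v t) (du t + (0:ℝ) • dv t)) * ((k:ℝ)+1))
      (fun k => ?_) (Eventually.of_forall fun t => ?_)
    · exact ((hmeasF _).sub (hmeasF 0)).mul aestronglyMeasurable_const
    · have hd := hdiffAll t 0
      have h2 := tendsto_slope_of_hasDerivAt' hd
      have h3 := h2.comp hseq
      exact h3.congr fun k => by simp [Function.comp, one_div, div_eq_mul_inv]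
  -- the uniform bound
  set bound : Ep p → ℝ := fun t =>
    (a 0 + |M| * (‖u t‖ + ‖v t‖)) * ‖v t‖ * B +
      (a 0 + |M| * (‖du t‖ + ‖dv t‖)) * ‖dv t‖ * B with hbounddef
  have hbound_int : Integrable bound μ := by
    have m1 : MemLp (fun t => a 0 + |M| * (‖u t‖ + ‖v t‖)) 2 μ :=
      (memLp_const (a 0)).add ((huL2.norm.add hvL2.norm).const_mul |M|)
    have m2 : MemLp (fun t => a 0 + |M| * (‖du t‖ + ‖dv t‖)) 2 μ :=
      (memLp_const (a 0)).add ((hduL2.norm.add hdvL2.norm).const_mul |M|)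
    exact ((int_mul_of_L2' m1 hvL2.norm).mul_const B).add
      ((int_mul_of_L2' m2 hdvL2.norm).mul_const B)
  have hbnd : ∀ᵐ t ∂μ, ∀ lam ∈ Metric.ball (0:ℝ) 1,
      ‖(⟪gradient (fun x' => L t x' (du t + lam • dv t)) (u t + lam • v t), v t⟫ +
        ⟪gradient (fun y' => L t (u t + lam • v t) y') (du t + lam • dv t), dv t⟫)‖ ≤ bound t := by
    filter_upwards [ae_restrict_mem hKmeas] with t ht lam hlam
    rw [Metric.mem_ball, dist_zero_right, Real.norm_eq_abs] at hlam
    set x := u t + lam • v t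
    set y := du t + lam • dv t
    have hxn : ‖x‖ ≤ ‖u t‖ + ‖v t‖ := by
      refine le_trans (norm_add_le _ _) ?_
      have : ‖lam • v t‖ ≤ ‖v t‖ := by
        rw [norm_smul, Real.norm_eq_abs]
        nlinarith [norm_nonneg (v t)]
      linarith
    have hyn : ‖y‖ ≤ ‖du t‖ + ‖dv t‖ := by
      refine le_trans (norm_add_le _ _) ?_
      have : ‖lam • dv t‖ ≤ ‖dv t‖ := by
        rw [norm_smul, Real.norm_eq_abs]
        nlinarith [norm_nonneg (dv t)]
      linarith
    have ha1 : a ‖x‖ ≤ a 0 + |M| * (‖u t‖ + ‖v t‖) :=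
      le_trans (a_growth' a ha M ha' _ (norm_nonneg x))
        (by nlinarith [abs_nonneg M])
    have ha2 : a ‖y‖ ≤ a 0 + |M| * (‖du t‖ + ‖dv t‖) :=
      le_trans (a_growth' a ha M ha' _ (norm_nonneg y))
        (by nlinarith [abs_nonneg M])
    have hbt : b t ≤ B := le_trans (le_abs_self _) (Real.norm_eq_abs (b t) ▸ hB t ht)
    have hbt0 : 0 ≤ b t := hbpos t ht
    have hax0 : 0 ≤ a ‖x‖ := hapos _ (norm_nonneg x)
    have hay0 : 0 ≤ a ‖y‖ := hapos _ (norm_nonneg y)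
    have hg1 := hLx t ht x y
    have hg2 := hLy t ht x y
    have hi1 : |⟪gradient (fun x' => L t x' y) x, v t⟫| ≤
        ‖gradient (fun x' => L t x' y) x‖ * ‖v t‖ := abs_real_inner_le_norm _ _
    have hi2 : |⟪gradient (fun y' => L t x y') y, dv t⟫| ≤
        ‖gradient (fun y' => L t x y') y‖ * ‖dv t‖ := abs_real_inner_le_norm _ _
    rw [Real.norm_eq_abs]
    have habs := abs_add_le (⟪gradient (fun x' => L t x' y) x, v t⟫)
      (⟪gradient (fun y' => L t x y') y, dv t⟫)
    have hA1 : ‖gradient (fun x' => L t x' y) x‖ * ‖v t‖ ≤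
        (a 0 + |M| * (‖u t‖ + ‖v t‖)) * ‖v t‖ * B := by
      have hstep : ‖gradient (fun x' => L t x' y) x‖ ≤
          (a 0 + |M| * (‖u t‖ + ‖v t‖)) * B := by
        refine le_trans hg1 ?_
        exact mul_le_mul ha1 hbt hbt0 (le_trans hax0 ha1)
      nlinarith [norm_nonneg (v t), norm_nonneg (gradient (fun x' => L t x' y) x)]
    have hA2 : ‖gradient (fun y' => L t x y') y‖ * ‖dv t‖ ≤
        (a 0 + |M| * (‖du t‖ + ‖dv t‖)) * ‖dv t‖ * B := by
      have hstep : ‖gradient (fun y' => L t x y') y‖ ≤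
          (a 0 + |M| * (‖du t‖ + ‖dv t‖)) * B := by
        refine le_trans hg2 ?_
        exact mul_le_mul ha2 hbt hbt0 (le_trans hay0 ha2)
      nlinarith [norm_nonneg (dv t), norm_nonneg (gradient (fun y' => L t x y') y)]
    rw [hbounddef]
    dsimp only
    linarith
  -- integrability of F 0
  have hFint : Integrable (fun t => L t (u t + (0:ℝ) • v t) (du t + (0:ℝ) • dv t)) μ := by
    have hg0 : Integrable (fun t => (a 0 + |M| * (‖u t‖ + ‖du t‖ ^ 2)) * B) μ := by
      refine Integrable.mul_const ?_ B
      exact (integrable_const (a 0)).add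
        (((huL2.norm.integrable h12).add hduL2.norm.integrable_sq).const_mul |M|)
    refine Integrable.mono' hg0 (hmeasF 0) (?_)
    filter_upwards [ae_restrict_mem hKmeas] with t ht
    simp only [zero_smul, add_zero]
    have h1 := hL t ht (u t) (du t)
    have harg : (0:ℝ) ≤ ‖u t‖ + ‖du t‖ ^ 2 := by positivity
    have ha1 : a (‖u t‖ + ‖du t‖ ^ 2) ≤ a 0 + |M| * (‖u t‖ + ‖du t‖ ^ 2) :=
      a_growth' a ha M ha' _ harg
    have hbt : b t ≤ B := le_trans (le_abs_self _) (Real.norm_eq_abs (b t) ▸ hB t ht)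
    have hbt0 : 0 ≤ b t := hbpos t ht
    have hax0 : 0 ≤ a (‖u t‖ + ‖du t‖ ^ 2) := hapos _ harg
    rw [Real.norm_eq_abs]
    calc |L t (u t) (du t)| ≤ a (‖u t‖ + ‖du t‖ ^ 2) * b t := h1
      _ ≤ (a 0 + |M| * (‖u t‖ + ‖du t‖ ^ 2)) * B :=
        mul_le_mul ha1 hbt hbt0 (le_trans hax0 ha1)
  -- apply differentiation under the integral sign
  have H := hasDerivAt_integral_of_dominated_loc_of_deriv_le (μ := μ) (x₀ := (0:ℝ)) (s := Metric.ball (0:ℝ) 1)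
    (F := fun lam t => L t (u t + lam • v t) (du t + lam • dv t))
    (F' := fun lam t =>
      ⟪gradient (fun x' => L t x' (du t + lam • dv t)) (u t + lam • v t), v t⟫ +
        ⟪gradient (fun y' => L t (u t + lam • v t) y') (du t + lam • dv t), dv t⟫)
    (bound := bound) (Metric.ball_mem_nhds 0 one_pos) (Eventually.of_forall hmeasF) hFint hF'0meas hbnd hbound_int
    (Eventually.of_forall fun t lam _ => hdiffAll t lam)
  have key := tendsto_slope_of_hasDerivAt' H.2
  simp only [zero_smul, add_zero] at key
  exact key
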